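/- Let M be an n-element finite matroid and (e₁,…,eₙ) a path-decomposition of M of width t. For an index i, let X = {e₁,…,e_i} and Y = {e_{i+1},…,eₙ} = E(M)∖X, and suppose λ_M(X) = t. Assume there exists a circuit C ⊆ E(M) such that no element of C lies in cl_M(X) ∩ cl_M(Y) and μ_M(X,C) = r_M(C). Then X ∩ C ≠ ∅ and Y ∩ C ≠ ∅. -/

import Mathlib

/-- A finite matroid on ground set `E`, given by its rank function, which satisfies
`r ∅ = 0`, the unit-increase property, and submodularity (on subsets of `E`). -/
structure FinMatroid (α : Type*) [DecidableEq α] where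
  E : Finset α
  r : Finset α → ℕ
  r_empty : r ∅ = 0
  r_le_insert : ∀ X ⊆ E, ∀ e ∈ E, r X ≤ r (insert e X)
  r_insert_le : ∀ X ⊆ E, ∀ e ∈ E, r (insert e X) ≤ r X + 1
  r_submod : ∀ X ⊆ E, ∀ Y ⊆ E, r (X ∪ Y) + r (X ∩ Y) ≤ r X + r Y

namespace FinMatroid

variable {α : Type*} [DecidableEq α]

/-- A set is independent if it is a subset of the ground set whose rank equals its
cardinality. -/
def Indep (M : FinMatroid α) (X : Finset α) : Prop :=
  X ⊆ M.E ∧ M.r X = X.card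

/-- A set is dependent if it is a subset of the ground set that is not independent. -/
def Dep (M : FinMatroid α) (X : Finset α) : Prop :=
  X ⊆ M.E ∧ M.r X ≠ X.card

/-- A circuit is a minimal dependent set: a dependent set all of whose proper subsets
are independent. -/
def Circuit (M : FinMatroid α) (C : Finset α) : Prop :=
  M.Dep C ∧ ∀ C' ⊂ C, M.Indep C'

/-- The connectivity function `λ_M(X) = r(X) + r(E \ X) - r(E)`. -/
def lambda (M : FinMatroid α) (X : Finset α) : ℤ :=
  (M.r X : ℤ) + (M.r (M.E \ X) : ℤ) - (M.r M.E : ℤ)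

/-- `μ_M(X, A) = r(X ∪ A) + r((E \ X) ∪ A) - r(E)`. -/
def mu (M : FinMatroid α) (X A : Finset α) : ℤ :=
  (M.r (X ∪ A) : ℤ) + (M.r ((M.E \ X) ∪ A) : ℤ) - (M.r M.E : ℤ)

/-- The closure `cl_M(X) = {e ∈ E : r(X ∪ {e}) = r(X)}`. -/
def cl (M : FinMatroid α) (X : Finset α) : Finset α :=
  M.E.filter fun e => M.r (insert e X) = M.r X

/-- The width of the path-decomposition (ordering) given by the list `L`:
the maximum of `λ_M({e₁, …, e_i})` over the nonempty prefixes of `L`. -/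
def pdWidth (M : FinMatroid α) (L : List α) : ℤ :=
  ((List.range L.length).map fun i => M.lambda (L.take (i + 1)).toFinset).foldr max 0

/-- The path-width of a matroid: the minimum width over all orderings of the ground
set. -/
noncomputable def pathwidth (M : FinMatroid α) : ℤ :=
  sInf (M.pdWidth '' { L : List α | L.Nodup ∧ L.toFinset = M.E })

end FinMatroid

/-!
Suppose `C` avoids `X`, and let `P ⊇ X` be the first prefix of the path-decomposition that
meets `C`, say in `f`. The rest of `C` lies in `E \ X`, so `f ∈ cl(E \ X)`, hence `f ∉ cl(X)`.
Three applications of submodularity, to `P` and `X ∪ C`, to `P ∪ C` and `E \ X`, and to `E \ P`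
and `(P ∪ C) \ X`, combined with `μ(X, C) = r(C)` and `r(C - f) = r(C)`, give
`λ(P) ≥ λ(X) + 1 = t + 1`, contradicting the width. If `C` avoids `E \ X`, apply the same
argument to `E \ X` and the complement of the last prefix not containing `C`.
-/

namespace Nat

theorem exists_eq_one_of_succ_le_add_one {g : ℕ → ℕ} (hg : ∀ k, g (k + 1) ≤ g k + 1)
    {a b : ℕ} (hab : a ≤ b) (ha : g a = 0) (hb : g b ≠ 0) : ∃ k, a ≤ k ∧ g k = 1 := by
  induction b, hab using Nat.le_induction with
  | base => exact absurd ha hb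
  | succ b _ ih =>
    by_cases hgb : g b = 0
    · exact ⟨b + 1, by omega, by have := hg b; omega⟩
    · exact ih hgb

theorem exists_eq_one_of_le_succ_add_one {g : ℕ → ℕ} (hg : ∀ k, g k ≤ g (k + 1) + 1)
    {a b : ℕ} (hab : a ≤ b) (ha : g a ≠ 0) (hb : g b = 0) : ∃ k ≤ b, g k = 1 := by
  induction b, hab using Nat.le_induction with
  | base => exact absurd hb ha
  | succ b _ ih =>
    by_cases hgb : g b = 0
    · obtain ⟨k, hk, hgk⟩ := ih hgb
      exact ⟨k, by omega, hgk⟩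
    · exact ⟨b, by omega, by have := hg b; omega⟩

end Nat

namespace List

variable {α : Type*} [DecidableEq α]

theorem toFinset_take_subset (L : List α) (k : ℕ) : (L.take k).toFinset ⊆ L.toFinset :=
  fun _ hx ↦ mem_toFinset.mpr (take_subset k L (mem_toFinset.mp hx))

theorem toFinset_take_mono (L : List α) : Monotone fun k ↦ (L.take k).toFinset :=
  fun _ _ h _ hx ↦ mem_toFinset.mpr (take_subset_take_left L h (mem_toFinset.mp hx))

theorem card_toFinset_take_succ_sdiff_le_one (L : List α) (k : ℕ) :
    ((L.take (k + 1)).toFinset \ (L.take k).toFinset).card ≤ 1 := by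
  rw [take_add_one, toFinset_append, Finset.union_sdiff_left]
  exact (Finset.card_le_card Finset.sdiff_subset).trans (by cases L[k]? <;> simp)

theorem exists_toFinset_take_inter_eq_singleton {L : List α} {C : Finset α}
    (hCL : C ⊆ L.toFinset) (hC : C.Nonempty) {i : ℕ}
    (hi : _root_.Disjoint (L.take i).toFinset C) :
    ∃ k, i ≤ k ∧ ∃ f, (L.take k).toFinset ∩ C = {f} := by
  have hstep (k : ℕ) :
      ((L.take (k + 1)).toFinset ∩ C).card ≤ ((L.take k).toFinset ∩ C).card + 1 := by
    have hsub : (L.take (k + 1)).toFinset ∩ C ⊆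
        ((L.take k).toFinset ∩ C) ∪ ((L.take (k + 1)).toFinset \ (L.take k).toFinset) := by
      grind
    grw [Finset.card_le_card hsub, Finset.card_union_le, L.card_toFinset_take_succ_sdiff_le_one k]
  have htop : ((L.take (max i L.length)).toFinset ∩ C).card ≠ 0 := by
    rw [take_of_length_le (le_max_right _ _), Finset.inter_eq_right.mpr hCL]
    exact hC.card_ne_zero
  obtain ⟨k, hik, hk⟩ := Nat.exists_eq_one_of_succ_le_add_one
    (g := fun k ↦ ((L.take k).toFinset ∩ C).card) hstep (le_max_left i L.length)
    (by rwa [Finset.card_eq_zero, ← Finset.disjoint_iff_inter_eq_empty]) htop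
  exact ⟨k, hik, Finset.card_eq_one.mp hk⟩

theorem exists_sdiff_toFinset_take_eq_singleton {L : List α} {C : Finset α}
    (hC : C.Nonempty) {i : ℕ} (hi : C ⊆ (L.take i).toFinset) :
    ∃ k ≤ i, ∃ f, C \ (L.take k).toFinset = {f} := by
  have hstep (k : ℕ) :
      (C \ (L.take k).toFinset).card ≤ (C \ (L.take (k + 1)).toFinset).card + 1 := by
    have hsub : C \ (L.take k).toFinset ⊆
        (C \ (L.take (k + 1)).toFinset) ∪ ((L.take (k + 1)).toFinset \ (L.take k).toFinset) := by
      grind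
    grw [Finset.card_le_card hsub, Finset.card_union_le, L.card_toFinset_take_succ_sdiff_le_one k]
  obtain ⟨k, hki, hk⟩ := Nat.exists_eq_one_of_le_succ_add_one
    (g := fun k ↦ (C \ (L.take k).toFinset).card) hstep (Nat.zero_le i)
    (by simpa using hC.card_ne_zero)
    (by rwa [Finset.card_eq_zero, Finset.sdiff_eq_empty_iff_subset])
  exact ⟨k, hki, Finset.card_eq_one.mp hk⟩

end List

namespace FinMatroid

variable {α : Type*} [DecidableEq α] (M : FinMatroid α)

theorem r_mono {X Y : Finset α} (hY : Y ⊆ M.E) (hXY : X ⊆ Y) : M.r X ≤ M.r Y := by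
  have h : M.r X ≤ M.r (X ∪ (Y \ X)) := by
    refine Finset.induction_on' (motive := fun S ↦ M.r X ≤ M.r (X ∪ S)) (Y \ X) (by simp) ?_
    intro a S _ hS _ ih
    rw [Finset.union_insert]
    have hXS : X ∪ S ⊆ M.E := Finset.union_subset (hXY.trans hY) (hS.trans (by grind))
    exact ih.trans (M.r_le_insert _ hXS a (by grind))
  rwa [Finset.union_sdiff_of_subset hXY] at h

theorem cl_subset_cl {A B : Finset α} (hB : B ⊆ M.E) (hAB : A ⊆ B) : M.cl A ⊆ M.cl B := by
  intro e he
  rw [cl, Finset.mem_filter] at he ⊢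
  refine ⟨he.1, ?_⟩
  by_cases heB : e ∈ B
  · rw [Finset.insert_eq_self.mpr heB]
  have hsub := M.r_submod B hB (insert e A) (Finset.insert_subset he.1 (hAB.trans hB))
  rw [show B ∪ insert e A = insert e B by grind, show B ∩ insert e A = A by grind, he.2] at hsub
  have := M.r_le_insert B hB e he.1
  omega

theorem r_insert_of_notMem_cl {X : Finset α} (hX : X ⊆ M.E) {e : α} (he : e ∈ M.E)
    (heX : e ∉ M.cl X) : M.r (insert e X) = M.r X + 1 := by
  have h₁ := M.r_le_insert X hX e he
  have h₂ := M.r_insert_le X hX e he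
  have h₃ : M.r (insert e X) ≠ M.r X := fun h ↦ heX (Finset.mem_filter.mpr ⟨he, h⟩)
  omega

theorem lambda_compl {X : Finset α} (hX : X ⊆ M.E) : M.lambda (M.E \ X) = M.lambda X := by
  rw [lambda, lambda, Finset.sdiff_sdiff_eq_self hX]
  ring

theorem mu_compl {X : Finset α} (hX : X ⊆ M.E) (A : Finset α) :
    M.mu (M.E \ X) A = M.mu X A := by
  rw [mu, mu, Finset.sdiff_sdiff_eq_self hX]
  ring

section Circuit

variable {M} {C : Finset α} (hC : M.Circuit C)
include hC

theorem Circuit.nonempty : C.Nonempty := by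
  rw [Finset.nonempty_iff_ne_empty]
  rintro rfl
  exact hC.1.2 (by simp [M.r_empty])

theorem Circuit.r_erase {f : α} (hf : f ∈ C) : M.r (C.erase f) = C.card - 1 := by
  rw [(hC.2 _ (Finset.erase_ssubset hf)).2, Finset.card_erase_of_mem hf]

theorem Circuit.r_erase_eq {f : α} (hf : f ∈ C) : M.r (C.erase f) = M.r C := by
  have h₁ := M.r_mono hC.1.1 (Finset.erase_subset f C)
  have h₂ := M.r_insert_le _ ((Finset.erase_subset f C).trans hC.1.1) f (hC.1.1 hf)
  rw [Finset.insert_erase hf] at h₂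
  have h₃ := hC.r_erase hf
  have h₄ : M.r C ≠ C.card := hC.1.2
  have h₅ := hC.nonempty.card_pos
  omega

theorem Circuit.mem_cl_of_erase_subset {f : α} (hf : f ∈ C) {S : Finset α} (hS : S ⊆ M.E)
    (hCS : C.erase f ⊆ S) : f ∈ M.cl S :=
  M.cl_subset_cl hS hCS <| Finset.mem_filter.mpr
    ⟨hC.1.1 hf, by rw [Finset.insert_erase hf, hC.r_erase_eq hf]⟩

end Circuit

theorem pdWidth_nonneg (L : List α) : 0 ≤ M.pdWidth L := by
  unfold pdWidth
  induction (List.range L.length).map fun i ↦ M.lambda (L.take (i + 1)).toFinset with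
  | nil => rfl
  | cons a l ih => exact ih.trans (le_max_right _ _)

theorem lambda_take_le_pdWidth (L : List α) (k : ℕ) :
    M.lambda (L.take k).toFinset ≤ M.pdWidth L := by
  rcases Nat.eq_zero_or_pos (min k L.length) with h | h
  · rw [List.take_eq_nil_iff.mpr (by grind)]
    simpa [lambda, M.r_empty] using M.pdWidth_nonneg L
  · obtain ⟨j, hj⟩ : ∃ j, min k L.length = j + 1 := ⟨_, (Nat.succ_pred_eq_of_pos h).symm⟩
    rw [List.take_eq_take_iff.mpr (show min k L.length = min (j + 1) L.length by omega)]
    exact List.le_max_of_le' 0 (List.mem_map.mpr ⟨j, List.mem_range.mpr (by omega), rfl⟩) le_rfl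

theorem lambda_add_one_le_of_circuit {X P C : Finset α} {f : α} (hXE : X ⊆ M.E) (hP : P ⊆ M.E)
    (hXP : X ⊆ P) (hC : M.Circuit C) (hXC : Disjoint X C) (hPC : P ∩ C = {f})
    (hf : f ∉ M.cl X ∩ M.cl (M.E \ X)) (hmu : M.mu X C = M.r C) :
    M.lambda X + 1 ≤ M.lambda P := by
  have hCE : C ⊆ M.E := hC.1.1
  have hfC : f ∈ C := Finset.mem_of_mem_inter_right (hPC ▸ Finset.mem_singleton_self f)
  have hCY : C ⊆ M.E \ X := Finset.subset_sdiff.mpr ⟨hCE, hXC.symm⟩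
  have hfY : f ∈ M.cl (M.E \ X) :=
    hC.mem_cl_of_erase_subset hfC Finset.sdiff_subset ((C.erase_subset f).trans hCY)
  have hfX : M.r (insert f X) = M.r X + 1 :=
    M.r_insert_of_notMem_cl hXE (hCE hfC) fun h ↦ hf (Finset.mem_inter.mpr ⟨h, hfY⟩)
  have hmu' : (M.r (X ∪ C) : ℤ) + M.r (M.E \ X) = M.r M.E + M.r C := by
    rw [mu, Finset.union_eq_left.mpr hCY] at hmu
    linarith
  have h₁ := M.r_submod P hP (X ∪ C) (Finset.union_subset hXE hCE)
  have h₂ := M.r_submod (P ∪ C) (Finset.union_subset hP hCE) (M.E \ X) Finset.sdiff_subset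
  have h₃ := M.r_submod (M.E \ P) Finset.sdiff_subset ((P ∪ C) ∩ (M.E \ X))
    (Finset.inter_subset_right.trans Finset.sdiff_subset)
  have hPXC : P ∩ (X ∪ C) = insert f X := by
    rw [Finset.inter_union_distrib_left, Finset.inter_eq_right.mpr hXP, hPC, Finset.insert_eq,
      Finset.union_comm]
  have hCP : (M.E \ P) ∩ ((P ∪ C) ∩ (M.E \ X)) = C.erase f := by
    ext x
    have hx := Finset.ext_iff.mp hPC x
    simp only [Finset.mem_inter, Finset.mem_singleton] at hx
    have := @hCE x
    have := @Finset.disjoint_left.mp hXC x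
    simp only [Finset.mem_union, Finset.mem_sdiff, Finset.mem_inter, Finset.mem_erase]
    tauto
  rw [← Finset.union_assoc, Finset.union_eq_left.mpr hXP, hPXC, hfX] at h₁
  rw [show P ∪ C ∪ (M.E \ X) = M.E by grind] at h₂
  rw [show M.E \ P ∪ (P ∪ C) ∩ (M.E \ X) = M.E \ X by grind, hCP, hC.r_erase_eq hfC] at h₃
  unfold lambda
  linarith

section PathDecomposition

variable {L : List α} (hL : L.toFinset = M.E) {i : ℕ} {X : Finset α}
  (hX : X = (L.take i).toFinset) (hlX : M.lambda X = M.pdWidth L) {C : Finset α}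
  (hC : M.Circuit C) (hguts : ∀ e ∈ C, e ∉ M.cl X ∩ M.cl (M.E \ X)) (hmu : M.mu X C = M.r C)
include hL hX hlX hC hguts hmu

theorem inter_nonempty_of_lambda_eq_pdWidth : (X ∩ C).Nonempty := by
  rw [Finset.nonempty_iff_ne_empty, Ne, ← Finset.disjoint_iff_inter_eq_empty]
  intro hXC
  obtain ⟨k, hik, f, hPC⟩ :=
    List.exists_toFinset_take_inter_eq_singleton (hL ▸ hC.1.1) hC.nonempty (hX ▸ hXC)
  have hfC : f ∈ C := Finset.mem_of_mem_inter_right (hPC ▸ Finset.mem_singleton_self f)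
  have hXE : X ⊆ M.E := hX ▸ hL ▸ L.toFinset_take_subset i
  have hlt := M.lambda_add_one_le_of_circuit hXE (hL ▸ L.toFinset_take_subset k)
    (hX ▸ L.toFinset_take_mono hik) hC hXC hPC (hguts f hfC) hmu
  linarith [M.lambda_take_le_pdWidth L k]

theorem sdiff_inter_nonempty_of_lambda_eq_pdWidth : ((M.E \ X) ∩ C).Nonempty := by
  rw [Finset.nonempty_iff_ne_empty, Ne, ← Finset.disjoint_iff_inter_eq_empty]
  intro hYC
  have hXE : X ⊆ M.E := hX ▸ hL ▸ L.toFinset_take_subset i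
  have hCX : C ⊆ X := by
    have := Finset.subset_sdiff.mpr ⟨hC.1.1, hYC.symm⟩
    rwa [Finset.sdiff_sdiff_eq_self hXE] at this
  obtain ⟨k, hki, f, hCk⟩ :=
    List.exists_sdiff_toFinset_take_eq_singleton hC.nonempty (hX ▸ hCX)
  have hfC : f ∈ C := Finset.mem_sdiff.mp (hCk ▸ Finset.mem_singleton_self f) |>.1
  have hPC : (M.E \ (L.take k).toFinset) ∩ C = {f} := by
    rw [← hCk, Finset.sdiff_inter_right_comm, Finset.inter_eq_right.mpr hC.1.1]
  have hguts' : f ∉ M.cl (M.E \ X) ∩ M.cl (M.E \ (M.E \ X)) := by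
    rw [Finset.sdiff_sdiff_eq_self hXE, Finset.inter_comm]
    exact hguts f hfC
  have hlt := M.lambda_add_one_le_of_circuit Finset.sdiff_subset Finset.sdiff_subset
    (Finset.sdiff_subset_sdiff subset_rfl (hX ▸ L.toFinset_take_mono hki)) hC hYC hPC hguts'
    (by rwa [M.mu_compl hXE])
  rw [M.lambda_compl hXE, M.lambda_compl (hL ▸ L.toFinset_take_subset k)] at hlt
  linarith [M.lambda_take_le_pdWidth L k]

end PathDecomposition

end FinMatroid

open FinMatroid in
theorem circuit_meets_both_sides_general {α : Type*} [DecidableEq α] (M : FinMatroid α)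
    (L : List α) (hL : L.toFinset = M.E) (t : ℤ)
    (hw : M.pdWidth L = t)
    (i : ℕ) (X Y : Finset α)
    (hX : X = (L.take i).toFinset) (hY : Y = M.E \ X)
    (hlX : M.lambda X = t)
    (C : Finset α) (hC : M.Circuit C)
    (hguts : ∀ e ∈ C, e ∉ M.cl X ∩ M.cl Y)
    (hmu : M.mu X C = (M.r C : ℤ)) :
    (X ∩ C).Nonempty ∧ (Y ∩ C).Nonempty := by
  subst hY
  have hlX' := hlX.trans hw.symm
  exact ⟨M.inter_nonempty_of_lambda_eq_pdWidth hL hX hlX' hC hguts hmu,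
    M.sdiff_inter_nonempty_of_lambda_eq_pdWidth hL hX hlX' hC hguts hmu⟩

open FinMatroid in
/-- Let `(e₁, …, eₙ)` (the list `L`) be a path-decomposition of `M` of width `t`, let
`X = {e₁, …, e_i}` and `Y = E(M) \ X` with `λ_M(X) = t`. If `C` is a circuit of `M`
no element of which lies in `cl_M(X) ∩ cl_M(Y)` and `μ_M(X, C) = r_M(C)`, then
`X ∩ C ≠ ∅ ≠ Y ∩ C`. -/
theorem circuit_meets_both_sides {α : Type*} [DecidableEq α] (M : FinMatroid α)
    (L : List α) (hnd : L.Nodup) (hL : L.toFinset = M.E) (t : ℤ)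
    (hw : M.pdWidth L = t)
    (i : ℕ) (hi : i ≤ L.length) (X Y : Finset α)
    (hX : X = (L.take i).toFinset) (hY : Y = M.E \ X)
    (hlX : M.lambda X = t)
    (C : Finset α) (hC : M.Circuit C)
    (hguts : ∀ e ∈ C, e ∉ M.cl X ∩ M.cl Y)
    (hmu : M.mu X C = (M.r C : ℤ)) :
    (X ∩ C).Nonempty ∧ (Y ∩ C).Nonempty :=
  circuit_meets_both_sides_general M L hL t hw i X Y hX hY hlX C hC hguts hmu
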